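/- Let M ∈ ℝ^{k×d} have singular values σ₁(M) > σ₂(M) with σ₁(M) > 0 (the largest singular value is simple), and let u₁ ∈ ℝ^k, v₁ ∈ ℝ^d be unit vectors with M v₁ = σ₁(M) u₁ and Mᵀ u₁ = σ₁(M) v₁. Then for every γ > 0, the matrix γ u₁ v₁ᵀ is the unique maximizer of ⟨M, Δ⟩ over {Δ ∈ ℝ^{k×d} : ‖Δ‖_* ≤ γ}: any Δ with ‖Δ‖_* ≤ γ and ⟨M, Δ⟩ = γ σ₁(M) must equal γ u₁ v₁ᵀ. -/
import Mathlib


open Matrix Filter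

/-- Euclidean norm of a vector in ℝ^k. -/
noncomputable def euclNorm {k : ℕ} (u : Fin k → ℝ) : ℝ := Real.sqrt (∑ i, u i ^ 2)

/-- Largest singular value of `M`: the square root of the largest eigenvalue of `M * Mᵀ`. -/
noncomputable def sigma1 {k d : ℕ} (M : Matrix (Fin k) (Fin d) ℝ) : ℝ :=
  Real.sqrt (⨆ i, (Matrix.isHermitian_mul_conjTranspose_self M).eigenvalues i)

/-- Second largest singular value of `M` (with multiplicity): the square root of the second
largest eigenvalue of `M * Mᵀ`, expressed as `min over i of (max over j ≠ i)`. -/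
noncomputable def sigma2 {k d : ℕ} (M : Matrix (Fin k) (Fin d) ℝ) : ℝ :=
  Real.sqrt (⨅ i : Fin k, ⨆ j : {j : Fin k // j ≠ i},
    (Matrix.isHermitian_mul_conjTranspose_self M).eigenvalues (j : Fin k))

/-- Nuclear norm of `M`: the sum of its singular values, i.e. of the square roots of the
eigenvalues of `M * Mᵀ`. -/
noncomputable def nuclearNorm {k d : ℕ} (M : Matrix (Fin k) (Fin d) ℝ) : ℝ :=
  ∑ i, Real.sqrt ((Matrix.isHermitian_mul_conjTranspose_self M).eigenvalues i)

namespace NucAux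
open Matrix
variable {n m : ℕ}

lemma cs (a b : Fin n → ℝ) : a ⬝ᵥ b ≤ Real.sqrt (a ⬝ᵥ a) * Real.sqrt (b ⬝ᵥ b) := by
  have h := Real.sum_mul_le_sqrt_mul_sqrt Finset.univ a b
  simpa [dotProduct, pow_two] using h

section eig
variable (X : Matrix (Fin n) (Fin m) ℝ)

noncomputable def lam (i : Fin n) : ℝ :=
  (isHermitian_mul_conjTranspose_self X).eigenvalues i

noncomputable def evec (i : Fin n) : Fin n → ℝ :=
  ⇑((isHermitian_mul_conjTranspose_self X).eigenvectorBasis i)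

lemma lam_nonneg (i : Fin n) : 0 ≤ lam X i :=
  eigenvalues_self_mul_conjTranspose_nonneg X i

lemma evec_eig (i : Fin n) : (X * Xᵀ) *ᵥ evec X i = lam X i • evec X i := by
  have h := (isHermitian_mul_conjTranspose_self X).mulVec_eigenvectorBasis i
  rw [show X * Xᵀ = X * Xᴴ by rw [conjTranspose_eq_transpose_of_trivial]]
  exact h

lemma evec_orth (i j : Fin n) : evec X i ⬝ᵥ evec X j = if i = j then 1 else 0 := by
  classical
  set hA := isHermitian_mul_conjTranspose_self X
  have hU : (star (hA.eigenvectorUnitary : Matrix (Fin n) (Fin n) ℝ)) *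
      (hA.eigenvectorUnitary : Matrix (Fin n) (Fin n) ℝ) = 1 :=
    Matrix.mem_unitaryGroup_iff'.mp (hA.eigenvectorUnitary).2
  have h := congrFun (congrFun hU i) j
  simpa [Matrix.mul_apply, Matrix.one_apply, Matrix.star_eq_conjTranspose,
    Matrix.conjTranspose_apply, IsHermitian.eigenvectorUnitary_apply, dotProduct,
    evec] using h

lemma evec_compl (l l' : Fin n) :
    ∑ i, evec X i l * evec X i l' = if l = l' then 1 else 0 := by
  classical
  set hA := isHermitian_mul_conjTranspose_self X
  have hU : (hA.eigenvectorUnitary : Matrix (Fin n) (Fin n) ℝ) *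
      (star (hA.eigenvectorUnitary : Matrix (Fin n) (Fin n) ℝ)) = 1 :=
    Matrix.mem_unitaryGroup_iff.mp (hA.eigenvectorUnitary).2
  have h := congrFun (congrFun hU l) l'
  simpa [Matrix.mul_apply, Matrix.one_apply, Matrix.star_eq_conjTranspose,
    Matrix.conjTranspose_apply, IsHermitian.eigenvectorUnitary_apply, dotProduct,
    evec] using h

lemma evec_norm (i : Fin n) : evec X i ⬝ᵥ evec X i = 1 := by
  simpa using evec_orth X i i

end eig

lemma expand (evec : Fin n → Fin n → ℝ)
    (hcompl : ∀ l l', ∑ i, evec i l * evec i l' = if l = l' then 1 else 0)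
    (w : Fin n → ℝ) (l : Fin n) :
    ∑ i, (evec i ⬝ᵥ w) * evec i l = w l := by
  classical
  have h : ∀ i, (evec i ⬝ᵥ w) * evec i l = ∑ j, w j * (evec i j * evec i l) := by
    intro i
    rw [dotProduct, Finset.sum_mul]
    exact Finset.sum_congr rfl fun j _ => by ring
  simp_rw [h]
  rw [Finset.sum_comm]
  simp_rw [← Finset.mul_sum, hcompl]
  simp

lemma dot_self_expand (evec : Fin n → Fin n → ℝ)
    (hcompl : ∀ l l', ∑ i, evec i l * evec i l' = if l = l' then 1 else 0)
    (w : Fin n → ℝ) :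
    w ⬝ᵥ w = ∑ i, (evec i ⬝ᵥ w) ^ 2 := by
  have h : ∀ i, (evec i ⬝ᵥ w) ^ 2 = ∑ l, ((evec i ⬝ᵥ w) * evec i l) * w l := by
    intro i
    calc (evec i ⬝ᵥ w) ^ 2 = (evec i ⬝ᵥ w) * ∑ l, evec i l * w l := by rw [pow_two]; rfl
      _ = ∑ l, ((evec i ⬝ᵥ w) * evec i l) * w l := by
          rw [Finset.mul_sum]; exact Finset.sum_congr rfl fun l _ => by ring
  simp_rw [h]
  rw [Finset.sum_comm]
  simp_rw [← Finset.sum_mul, expand evec hcompl w]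
  rw [dotProduct]

lemma mulVec_expand (N : Matrix (Fin n) (Fin n) ℝ) (evec : Fin n → Fin n → ℝ) (lam : Fin n → ℝ)
    (hcompl : ∀ l l', ∑ i, evec i l * evec i l' = if l = l' then 1 else 0)
    (heig : ∀ i, N *ᵥ evec i = lam i • evec i)
    (w : Fin n → ℝ) (l : Fin n) :
    (N *ᵥ w) l = ∑ i, lam i * (evec i ⬝ᵥ w) * evec i l := by
  have h1 : (N *ᵥ w) l = ∑ j, N l j * w j := rfl
  have h2 : ∀ j, N l j * w j = ∑ i, (evec i ⬝ᵥ w) * (N l j * evec i j) := by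
    intro j
    have e : (∑ i, (evec i ⬝ᵥ w) * (N l j * evec i j))
        = N l j * ∑ i, (evec i ⬝ᵥ w) * evec i j := by
      rw [Finset.mul_sum]; exact Finset.sum_congr rfl fun i _ => by ring
    rw [e, expand evec hcompl w j]
  rw [h1]
  simp_rw [h2]
  rw [Finset.sum_comm]
  refine Finset.sum_congr rfl fun i _ => ?_
  rw [← Finset.mul_sum]
  have h3 : (∑ j, N l j * evec i j) = (N *ᵥ evec i) l := rfl
  rw [h3, heig i]
  simp [Pi.smul_apply]
  ring

lemma rayleigh_expand (N : Matrix (Fin n) (Fin n) ℝ) (evec : Fin n → Fin n → ℝ) (lam : Fin n → ℝ)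
    (hcompl : ∀ l l', ∑ i, evec i l * evec i l' = if l = l' then 1 else 0)
    (heig : ∀ i, N *ᵥ evec i = lam i • evec i)
    (w : Fin n → ℝ) :
    w ⬝ᵥ (N *ᵥ w) = ∑ i, lam i * (evec i ⬝ᵥ w) ^ 2 := by
  rw [dotProduct]
  simp_rw [mulVec_expand N evec lam hcompl heig w, Finset.mul_sum]
  rw [Finset.sum_comm]
  refine Finset.sum_congr rfl fun i _ => ?_
  have h : ∀ l, w l * (lam i * (evec i ⬝ᵥ w) * evec i l)
      = (lam i * (evec i ⬝ᵥ w)) * (evec i l * w l) := fun l => by ring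
  simp_rw [h, ← Finset.mul_sum]
  rw [show (∑ l, evec i l * w l) = evec i ⬝ᵥ w from rfl]
  ring

lemma rayleigh_le (N : Matrix (Fin n) (Fin n) ℝ) (evec : Fin n → Fin n → ℝ) (lam : Fin n → ℝ)
    (hcompl : ∀ l l', ∑ i, evec i l * evec i l' = if l = l' then 1 else 0)
    (heig : ∀ i, N *ᵥ evec i = lam i • evec i)
    (lmax : ℝ) (hle : ∀ i, lam i ≤ lmax)
    (w : Fin n → ℝ) :
    w ⬝ᵥ (N *ᵥ w) ≤ lmax * (w ⬝ᵥ w) := by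
  rw [rayleigh_expand N evec lam hcompl heig w, dot_self_expand evec hcompl w, Finset.mul_sum]
  exact Finset.sum_le_sum fun i _ => mul_le_mul_of_nonneg_right (hle i) (sq_nonneg _)

lemma trace_formula (P Q : Matrix (Fin n) (Fin m) ℝ) (evec : Fin n → Fin n → ℝ)
    (hcompl : ∀ l l', ∑ i, evec i l * evec i l' = if l = l' then 1 else 0) :
    (Pᵀ * Q).trace = ∑ i, (Pᵀ *ᵥ evec i) ⬝ᵥ (Qᵀ *ᵥ evec i) := by
  classical
  have hterm : ∀ i, (Pᵀ *ᵥ evec i) ⬝ᵥ (Qᵀ *ᵥ evec i)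
      = ∑ j, ∑ l, ∑ r, P l j * Q r j * (evec i l * evec i r) := by
    intro i
    rw [dotProduct]
    refine Finset.sum_congr rfl fun j _ => ?_
    have h1 : (Pᵀ *ᵥ evec i) j = ∑ l, P l j * evec i l := by
      simp [mulVec, dotProduct, transpose_apply, mul_comm]
    have h2 : (Qᵀ *ᵥ evec i) j = ∑ r, Q r j * evec i r := by
      simp [mulVec, dotProduct, transpose_apply, mul_comm]
    rw [h1, h2, Finset.sum_mul_sum]
    exact Finset.sum_congr rfl fun l _ => Finset.sum_congr rfl fun r _ => by ring
  simp_rw [hterm]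
  rw [Finset.sum_comm]
  have hswap : ∀ j, (∑ i, ∑ l, ∑ r, P l j * Q r j * (evec i l * evec i r))
      = ∑ l, ∑ r, P l j * Q r j * (∑ i, evec i l * evec i r) := by
    intro j
    rw [Finset.sum_comm]
    refine Finset.sum_congr rfl fun l _ => ?_
    rw [Finset.sum_comm]
    refine Finset.sum_congr rfl fun r _ => ?_
    rw [Finset.mul_sum]
  simp_rw [hswap, hcompl]
  rw [Matrix.trace]
  refine Finset.sum_congr rfl fun j _ => ?_
  simp only [mul_ite, mul_one, mul_zero, Finset.sum_ite_eq', Finset.mem_univ, if_true]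
  rw [Matrix.diag_apply, Matrix.mul_apply]
  exact Finset.sum_congr rfl fun l _ => by simp [transpose_apply]

lemma dot_tX_eq (X : Matrix (Fin n) (Fin m) ℝ) (v : Fin n → ℝ) :
    (Xᵀ *ᵥ v) ⬝ᵥ (Xᵀ *ᵥ v) = v ⬝ᵥ ((X * Xᵀ) *ᵥ v) := by
  rw [← mulVec_mulVec, dotProduct_mulVec v X (Xᵀ *ᵥ v), mulVec_transpose]

lemma coeff_zero (N : Matrix (Fin n) (Fin n) ℝ) (evec : Fin n → Fin n → ℝ) (lam : Fin n → ℝ)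
    (hcompl : ∀ l l', ∑ i, evec i l * evec i l' = if l = l' then 1 else 0)
    (heig : ∀ i, N *ᵥ evec i = lam i • evec i)
    (lmax : ℝ) (hle : ∀ i, lam i ≤ lmax)
    (z : Fin n → ℝ) (hz : z ⬝ᵥ (N *ᵥ z) = lmax * (z ⬝ᵥ z))
    (i : Fin n) (hi : lam i ≠ lmax) : evec i ⬝ᵥ z = 0 := by
  classical
  have hsum : ∑ j, (lmax - lam j) * (evec j ⬝ᵥ z) ^ 2 = 0 := by
    have h1 := rayleigh_expand N evec lam hcompl heig z
    have h2 := dot_self_expand evec hcompl z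
    simp_rw [sub_mul]
    rw [Finset.sum_sub_distrib, ← Finset.mul_sum, ← h2, ← h1, hz, sub_self]
  have hnn : ∀ j ∈ Finset.univ, 0 ≤ (lmax - lam j) * (evec j ⬝ᵥ z) ^ 2 :=
    fun j _ => mul_nonneg (sub_nonneg.mpr (hle j)) (sq_nonneg _)
  have hterm := (Finset.sum_eq_zero_iff_of_nonneg hnn).mp hsum i (Finset.mem_univ i)
  have hpos : 0 < lmax - lam i := sub_pos.mpr (lt_of_le_of_ne (hle i) hi)
  rcases mul_eq_zero.mp hterm with h | h
  · exact absurd h (ne_of_gt hpos)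
  · exact pow_eq_zero_iff (by norm_num) |>.mp h

lemma top_eigenspace (N : Matrix (Fin n) (Fin n) ℝ) (evec : Fin n → Fin n → ℝ) (lam : Fin n → ℝ)
    (hcompl : ∀ l l', ∑ i, evec i l * evec i l' = if l = l' then 1 else 0)
    (heig : ∀ i, N *ᵥ evec i = lam i • evec i)
    (lmax : ℝ) (hle : ∀ i, lam i ≤ lmax)
    (huniq : ∀ i j, lam i = lmax → lam j = lmax → i = j)
    (u : Fin n → ℝ) (hu : u ⬝ᵥ u = 1) (hur : u ⬝ᵥ (N *ᵥ u) = lmax)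
    (w : Fin n → ℝ) (hw : w ⬝ᵥ (N *ᵥ w) = lmax * (w ⬝ᵥ w)) :
    ∃ t : ℝ, w = t • u := by
  classical
  have hur' : u ⬝ᵥ (N *ᵥ u) = lmax * (u ⬝ᵥ u) := by rw [hur, hu, mul_one]
  have hex : ∃ i₀, lam i₀ = lmax := by
    by_contra hno
    push_neg at hno
    have hz : ∀ i, evec i ⬝ᵥ u = 0 := fun i =>
      coeff_zero N evec lam hcompl heig lmax hle u hur' i (hno i)
    have h0 : u ⬝ᵥ u = 0 := by
      rw [dot_self_expand evec hcompl u]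
      simp [hz]
    rw [hu] at h0; norm_num at h0
  obtain ⟨i₀, hi₀⟩ := hex
  have key : ∀ z : Fin n → ℝ, z ⬝ᵥ (N *ᵥ z) = lmax * (z ⬝ᵥ z) →
      z = (evec i₀ ⬝ᵥ z) • evec i₀ := by
    intro z hz
    funext l
    have he := expand evec hcompl z l
    rw [← he]
    rw [Finset.sum_eq_single i₀]
    · rfl
    · intro j _ hj
      have hj' : lam j ≠ lmax := fun h => hj (huniq j i₀ h hi₀)
      rw [coeff_zero N evec lam hcompl heig lmax hle z hz j hj', zero_mul]
    · intro h; exact absurd (Finset.mem_univ i₀) h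
  have hwz := key w hw
  have huz := key u hur'
  set a := evec i₀ ⬝ᵥ u with ha
  have hane : a ≠ 0 := by
    intro h0
    rw [h0, zero_smul] at huz
    rw [huz] at hu
    simp [dotProduct] at hu
  refine ⟨(evec i₀ ⬝ᵥ w) * a⁻¹, ?_⟩
  calc w = (evec i₀ ⬝ᵥ w) • evec i₀ := hwz
    _ = ((evec i₀ ⬝ᵥ w) * a⁻¹ * a) • evec i₀ := by
        rw [mul_assoc, inv_mul_cancel₀ hane, mul_one]
    _ = ((evec i₀ ⬝ᵥ w) * a⁻¹) • (a • evec i₀) := by rw [smul_smul]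
    _ = ((evec i₀ ⬝ᵥ w) * a⁻¹) • u := by rw [← huz]

lemma eq_of_cs_eq {p : ℕ} (b v : Fin p → ℝ) (s : ℝ)
    (h1 : b ⬝ᵥ b = s ^ 2) (h2 : v ⬝ᵥ v = 1) (h3 : v ⬝ᵥ b = s) :
    b = s • v := by
  have hz : (b - s • v) ⬝ᵥ (b - s • v) = 0 := by
    have e : (b - s • v) ⬝ᵥ (b - s • v)
        = b ⬝ᵥ b - s * (v ⬝ᵥ b) - (s * (v ⬝ᵥ b) - s * s * (v ⬝ᵥ v)) := by
      rw [sub_dotProduct, dotProduct_sub, dotProduct_sub, smul_dotProduct, dotProduct_smul,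
        smul_dotProduct, dotProduct_smul, dotProduct_comm b v]
      simp only [smul_eq_mul]
      ring
    rw [e, h1, h2, h3]
    ring
  have h0 : b - s • v = 0 := dotProduct_self_eq_zero.mp hz
  exact sub_eq_zero.mp h0

end NucAux

open NucAux in
/-- If the largest singular value of `M` is simple (`σ₁(M) > σ₂(M)`, `σ₁(M) > 0`) and
`(u₁, v₁)` is a corresponding top singular pair, then `γ • u₁ v₁ᵀ` is the unique maximizer
of `⟨M, Δ⟩` over the nuclear-norm ball of radius `γ`. -/
theorem nucgd_unique_maximizer {k d : ℕ} (M : Matrix (Fin k) (Fin d) ℝ)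
    (hpos : 0 < sigma1 M) (hsimple : sigma2 M < sigma1 M)
    (u₁ : Fin k → ℝ) (v₁ : Fin d → ℝ)
    (hu : euclNorm u₁ = 1) (hv : euclNorm v₁ = 1)
    (hMv : M.mulVec v₁ = sigma1 M • u₁)
    (hMu : Mᵀ.mulVec u₁ = sigma1 M • v₁)
    (γ : ℝ) (hγ : 0 < γ)
    (Δ : Matrix (Fin k) (Fin d) ℝ)
    (hΔ : nuclearNorm Δ ≤ γ)
    (hopt : (Mᵀ * Δ).trace = γ * sigma1 M) :
    Δ = γ • Matrix.vecMulVec u₁ v₁ := by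
  classical
  have hku : Nonempty (Fin k) := by
    by_contra hne
    have h0 : (∑ i, u₁ i ^ 2) = 0 := by
      rw [Finset.sum_eq_zero]; intro i _; exact absurd ⟨i⟩ hne
    rw [euclNorm, h0, Real.sqrt_zero] at hu; norm_num at hu
  set σ := sigma1 M with hσdef
  have hσnn : 0 ≤ σ := le_of_lt hpos
  -- unit-vector facts
  have hu1 : u₁ ⬝ᵥ u₁ = 1 := by
    have h1 : (∑ i, u₁ i ^ 2) = 1 := Real.sqrt_eq_one.mp hu
    simpa [dotProduct, pow_two] using h1
  have hv1 : v₁ ⬝ᵥ v₁ = 1 := by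
    have h1 : (∑ i, v₁ i ^ 2) = 1 := Real.sqrt_eq_one.mp hv
    simpa [dotProduct, pow_two] using h1
  -- M-side eigen machinery
  set μ : Fin k → ℝ := NucAux.lam M with hμdef
  set y : Fin k → Fin k → ℝ := NucAux.evec M with hydef
  have hycompl : ∀ l l', ∑ i, y i l * y i l' = (if l = l' then 1 else 0) :=
    NucAux.evec_compl M
  have hyeig : ∀ i, (M * Mᵀ) *ᵥ y i = μ i • y i := NucAux.evec_eig M
  have hμnn : ∀ i, 0 ≤ μ i := NucAux.lam_nonneg M
  set lmax : ℝ := ⨆ i, μ i with hlmaxdef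
  have hbdd : BddAbove (Set.range μ) := Set.Finite.bddAbove (Set.finite_range μ)
  have hle : ∀ i, μ i ≤ lmax := fun i => le_ciSup hbdd i
  have hlmax_nn : 0 ≤ lmax := le_trans (hμnn hku.some) (hle hku.some)
  have hσrfl : σ = Real.sqrt lmax := rfl
  have hσ2 : σ ^ 2 = lmax := by rw [hσrfl]; exact Real.sq_sqrt hlmax_nn
  -- u₁ is top eigenvector
  have hBu : (M * Mᵀ) *ᵥ u₁ = (σ ^ 2) • u₁ := by
    rw [← mulVec_mulVec, hMu, mulVec_smul, hMv, smul_smul, pow_two]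
  have hur : u₁ ⬝ᵥ ((M * Mᵀ) *ᵥ u₁) = lmax := by
    rw [hBu, dotProduct_smul, smul_eq_mul, hu1, mul_one, hσ2]
  -- simplicity
  have hlt : (⨅ i : Fin k, ⨆ j : {j : Fin k // j ≠ i}, μ (j : Fin k)) < lmax := by
    by_contra hge
    push_neg at hge
    have hs : σ ≤ sigma2 M := by
      rw [hσrfl]
      exact Real.sqrt_le_sqrt hge
    exact absurd hsimple (not_lt.mpr hs)
  have huniq : ∀ i j, μ i = lmax → μ j = lmax → i = j := by
    intro i j hi hj
    by_contra hij
    have hgei : ∀ i' : Fin k, lmax ≤ ⨆ j' : {j' : Fin k // j' ≠ i'}, μ (j' : Fin k) := by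
      intro i'
      have hbdd' : BddAbove (Set.range fun j' : {j' : Fin k // j' ≠ i'} => μ (j' : Fin k)) :=
        Set.Finite.bddAbove (Set.finite_range _)
      rcases eq_or_ne i i' with h | h
      · have hji' : j ≠ i' := fun hh => hij (h.trans hh.symm)
        calc lmax = μ j := hj.symm
          _ ≤ _ := le_ciSup hbdd' ⟨j, hji'⟩
      · calc lmax = μ i := hi.symm
          _ ≤ _ := le_ciSup hbdd' ⟨i, h⟩
    exact absurd hlt (not_lt.mpr (le_ciInf hgei))
  have htop : ∀ w : Fin k → ℝ, w ⬝ᵥ ((M * Mᵀ) *ᵥ w) = lmax * (w ⬝ᵥ w) → ∃ t, w = t • u₁ :=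
    fun w hw => top_eigenspace (M * Mᵀ) y μ hycompl hyeig lmax hle huniq u₁ hu1 hur w hw
  -- Δ-side machinery
  set lamΔ : Fin k → ℝ := NucAux.lam Δ with hlamdef
  set x : Fin k → Fin k → ℝ := NucAux.evec Δ with hxdef
  have hxcompl : ∀ l l', ∑ i, x i l * x i l' = (if l = l' then 1 else 0) :=
    NucAux.evec_compl Δ
  have hxorth : ∀ i j, x i ⬝ᵥ x j = (if i = j then 1 else 0) := NucAux.evec_orth Δ
  have hxeig : ∀ i, (Δ * Δᵀ) *ᵥ x i = lamΔ i • x i := NucAux.evec_eig Δ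
  have hxnorm : ∀ i, x i ⬝ᵥ x i = 1 := NucAux.evec_norm Δ
  have hlamnn : ∀ i, 0 ≤ lamΔ i := NucAux.lam_nonneg Δ
  set s : Fin k → ℝ := fun i => Real.sqrt (lamΔ i) with hsdef
  have hnuc : nuclearNorm Δ = ∑ i, s i := rfl
  have hs_nn : ∀ i, 0 ≤ s i := fun i => Real.sqrt_nonneg _
  have hs2 : ∀ i, s i ^ 2 = lamΔ i := fun i => Real.sq_sqrt (hlamnn i)
  set a : Fin k → Fin d → ℝ := fun i => Mᵀ *ᵥ x i with hadef
  set b : Fin k → Fin d → ℝ := fun i => Δᵀ *ᵥ x i with hbdef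
  have hbb : ∀ i, b i ⬝ᵥ b i = lamΔ i := by
    intro i
    show (Δᵀ *ᵥ x i) ⬝ᵥ (Δᵀ *ᵥ x i) = lamΔ i
    rw [dot_tX_eq Δ (x i), hxeig i, dotProduct_smul, smul_eq_mul, hxnorm i, mul_one]
  have haa : ∀ i, a i ⬝ᵥ a i ≤ σ ^ 2 := by
    intro i
    rw [hσ2]
    show (Mᵀ *ᵥ x i) ⬝ᵥ (Mᵀ *ᵥ x i) ≤ lmax
    rw [dot_tX_eq M (x i)]
    have h := rayleigh_le (M * Mᵀ) y μ hycompl hyeig lmax hle (x i)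
    rwa [hxnorm i, mul_one] at h
  have hsb : ∀ i, Real.sqrt (b i ⬝ᵥ b i) = s i := fun i => by rw [hbb i]
  have hsa : ∀ i, Real.sqrt (a i ⬝ᵥ a i) ≤ σ := by
    intro i
    have h := Real.sqrt_le_sqrt (haa i)
    rwa [Real.sqrt_sq hσnn] at h
  set T : Fin k → ℝ := fun i => a i ⬝ᵥ b i with hTdef
  have hTle : ∀ i, T i ≤ σ * s i := by
    intro i
    calc T i ≤ Real.sqrt (a i ⬝ᵥ a i) * Real.sqrt (b i ⬝ᵥ b i) := cs _ _
      _ = Real.sqrt (a i ⬝ᵥ a i) * s i := by rw [hsb i]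
      _ ≤ σ * s i := mul_le_mul_of_nonneg_right (hsa i) (hs_nn i)
  have htr : ∑ i, T i = γ * σ := by
    have h := trace_formula M Δ x hxcompl
    show ∑ i, a i ⬝ᵥ b i = γ * σ
    rw [← h, hopt]
  -- equality extraction
  have hsum_s_le : ∑ i, s i ≤ γ := by rw [← hnuc]; exact hΔ
  have hzero : ∑ i, (σ * s i - T i) = 0 := by
    have h1 : ∑ i, (σ * s i - T i) = σ * (∑ i, s i) - γ * σ := by
      rw [Finset.sum_sub_distrib, ← Finset.mul_sum, htr]
    have h2 : σ * (∑ i, s i) ≤ σ * γ := mul_le_mul_of_nonneg_left hsum_s_le hσnn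
    have h3 : 0 ≤ ∑ i, (σ * s i - T i) :=
      Finset.sum_nonneg fun i _ => sub_nonneg.mpr (hTle i)
    nlinarith
  have hTeq : ∀ i, T i = σ * s i := by
    intro i
    have h := (Finset.sum_eq_zero_iff_of_nonneg
      (fun i _ => sub_nonneg.mpr (hTle i))).mp hzero i (Finset.mem_univ i)
    linarith
  have hsγ : ∑ i, s i = γ := by
    have h1 : ∑ i, (σ * s i - T i) = σ * (∑ i, s i) - γ * σ := by
      rw [Finset.sum_sub_distrib, ← Finset.mul_sum, htr]
    rw [hzero] at h1
    nlinarith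
  -- per-index analysis for positive singular values
  have hkey : ∀ i, 0 < s i → ∃ t : ℝ, t ^ 2 = 1 ∧ x i = t • u₁ ∧ b i = (t * s i) • v₁ := by
    intro i hsi
    have haaeq : a i ⬝ᵥ a i = σ ^ 2 := by
      have hub : σ * s i ≤ Real.sqrt (a i ⬝ᵥ a i) * s i := by
        calc σ * s i = T i := (hTeq i).symm
          _ ≤ Real.sqrt (a i ⬝ᵥ a i) * Real.sqrt (b i ⬝ᵥ b i) := cs _ _
          _ = Real.sqrt (a i ⬝ᵥ a i) * s i := by rw [hsb i]
      have hle' : σ ≤ Real.sqrt (a i ⬝ᵥ a i) := le_of_mul_le_mul_right hub hsi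
      have heq : Real.sqrt (a i ⬝ᵥ a i) = σ := le_antisymm (hsa i) hle'
      have hnn : 0 ≤ a i ⬝ᵥ a i := Finset.sum_nonneg fun j _ => mul_self_nonneg _
      have h := Real.sq_sqrt hnn
      rw [heq] at h
      exact h.symm
    have hray : x i ⬝ᵥ ((M * Mᵀ) *ᵥ x i) = lmax * (x i ⬝ᵥ x i) := by
      rw [hxnorm i, mul_one, ← hσ2, ← haaeq]
      exact (dot_tX_eq M (x i)).symm
    obtain ⟨t, hxt⟩ := htop (x i) hray
    have ht2 : t ^ 2 = 1 := by
      have h1 := hxnorm i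
      rw [hxt, smul_dotProduct, dotProduct_smul, hu1] at h1
      simp only [smul_eq_mul, mul_one] at h1
      rw [pow_two]; exact h1
    have hai : a i = (t * σ) • v₁ := by
      show Mᵀ *ᵥ x i = (t * σ) • v₁
      rw [hxt, mulVec_smul, hMu, smul_smul]
    have hTi : (t * σ) * (v₁ ⬝ᵥ b i) = σ * s i := by
      have h1 := hTeq i
      show _ = _
      rw [show T i = a i ⬝ᵥ b i from rfl, hai, smul_dotProduct, smul_eq_mul] at h1
      exact h1
    have h2 : σ * (v₁ ⬝ᵥ b i) = σ * (t * s i) := by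
      linear_combination t * hTi - σ * (v₁ ⬝ᵥ b i) * ht2
    have hvb : v₁ ⬝ᵥ b i = t * s i := mul_left_cancel₀ (ne_of_gt hpos) h2
    have hbbs : b i ⬝ᵥ b i = (t * s i) ^ 2 := by
      rw [hbb i, ← hs2 i]
      linear_combination (-(s i)^2) * ht2
    exact ⟨t, ht2, hxt, eq_of_cs_eq (b i) v₁ (t * s i) hbbs hv1 hvb⟩
  -- exactly one positive index
  have hexpos : ∃ i₀, 0 < s i₀ := by
    by_contra hno
    push_neg at hno
    have hz : ∀ i, s i = 0 := fun i => le_antisymm (hno i) (hs_nn i)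
    rw [Finset.sum_congr rfl (fun i _ => hz i), Finset.sum_const, smul_zero] at hsγ
    exact absurd hsγ.symm (ne_of_gt hγ)
  obtain ⟨i₀, hi₀⟩ := hexpos
  have honly : ∀ j, j ≠ i₀ → s j = 0 := by
    intro j hj
    by_contra hsj
    have hsjpos : 0 < s j := lt_of_le_of_ne (hs_nn j) (Ne.symm hsj)
    obtain ⟨t, ht2, hxt, _⟩ := hkey i₀ hi₀
    obtain ⟨t', ht2', hxt', _⟩ := hkey j hsjpos
    have horth := hxorth j i₀
    rw [if_neg hj, hxt, hxt', smul_dotProduct, dotProduct_smul, hu1] at horth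
    simp only [smul_eq_mul, mul_one] at horth
    rcases mul_eq_zero.mp horth with h | h
    · rw [h] at ht2'; norm_num at ht2'
    · rw [h] at ht2; norm_num at ht2
  have hsi₀ : s i₀ = γ := by
    rw [← hsγ]
    rw [Finset.sum_eq_single i₀ (fun j _ hj => honly j hj)
      (fun h => absurd (Finset.mem_univ i₀) h)]
  have hbz : ∀ j, j ≠ i₀ → b j = 0 := by
    intro j hj
    have h : b j ⬝ᵥ b j = 0 := by
      rw [hbb j, ← hs2 j, honly j hj]; ring
    exact dotProduct_self_eq_zero.mp h
  obtain ⟨t, ht2, hxt, hbt⟩ := hkey i₀ hi₀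
  -- reconstruct Δ
  ext l r
  have hrecon : Δ l r = ∑ i, (b i r) * (x i l) := by
    have he := expand x hxcompl (fun j => Δ j r) l
    rw [← he]
    refine Finset.sum_congr rfl fun i _ => ?_
    congr 1
    show (x i) ⬝ᵥ (fun j => Δ j r) = b i r
    show (x i) ⬝ᵥ (fun j => Δ j r) = (Δᵀ *ᵥ x i) r
    simp [mulVec, dotProduct, transpose_apply, mul_comm]
  rw [hrecon, Finset.sum_eq_single i₀]
  · rw [hbt, hxt, hsi₀]
    simp only [Pi.smul_apply, smul_eq_mul, Matrix.smul_apply, Matrix.vecMulVec_apply]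
    linear_combination (γ * v₁ r * u₁ l) * ht2
  · intro j _ hj
    rw [hbz j hj]
    simp
  · intro h; exact absurd (Finset.mem_univ i₀) h
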